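/- arXiv:1812.08617 — 7 statements merged into one kernel-verified Lean document; each statement's English description precedes it below -/
import Mathlib

section
/- In online maximum-weight matching with vertex locking, for every right vertex b ∈ B the quantity ρ_t(b) is nondecreasing in time: for every time 0 ≤ t < T, ρ_t(b) ≤ ρ_{t+1}(b). -/
set_option linter.unusedSectionVars false

open Finset

/-- A set of edges of a bipartite graph is a matching if every left vertex and every
right vertex occurs in at most one edge. -/
def IsMatching {α β : Type*} (M : Finset (α × β)) : Prop :=
  (∀ e ∈ M, ∀ e' ∈ M, e.1 = e'.1 → e = e') ∧
  (∀ e ∈ M, ∀ e' ∈ M, e.2 = e'.2 → e = e')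

/-- `maxW w A B L` is the maximum of `∑ e ∈ M, w e` over all matchings `M ⊆ A ×ˢ B`
containing `L`. -/
noncomputable def maxW {α β : Type*} (w : α × β → ℝ)
    (A : Finset α) (B : Finset β) (L : Finset (α × β)) : ℝ :=
  sSup {x : ℝ | ∃ M : Finset (α × β),
    IsMatching M ∧ M ⊆ A ×ˢ B ∧ L ⊆ M ∧ x = ∑ e ∈ M, w e}

section Helpers

variable {α β : Type*} [DecidableEq α] [DecidableEq β]

lemma isMatching_subset {M N : Finset (α × β)} (h : IsMatching M) (hNM : N ⊆ M) :
    IsMatching N :=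
  ⟨fun e he e' he' => h.1 e (hNM he) e' (hNM he'),
   fun e he e' he' => h.2 e (hNM he) e' (hNM he')⟩

lemma isMatching_insert {M : Finset (α × β)} {e : α × β} (h : IsMatching M)
    (h1 : ∀ f ∈ M, f.1 ≠ e.1) (h2 : ∀ f ∈ M, f.2 ≠ e.2) : IsMatching (insert e M) := by
  constructor
  · intro g hg g' hg' hco
    rcases mem_insert.mp hg with hh | hh
    · rcases mem_insert.mp hg' with hh' | hh'
      · rw [hh, hh']
      · exact absurd (by rw [← hco, hh] : g'.1 = e.1) (h1 g' hh')
    · rcases mem_insert.mp hg' with hh' | hh'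
      · exact absurd (by rw [hco, hh'] : g.1 = e.1) (h1 g hh)
      · exact h.1 g hh g' hh' hco
  · intro g hg g' hg' hco
    rcases mem_insert.mp hg with hh | hh
    · rcases mem_insert.mp hg' with hh' | hh'
      · rw [hh, hh']
      · exact absurd (by rw [← hco, hh] : g'.2 = e.2) (h2 g' hh')
    · rcases mem_insert.mp hg' with hh' | hh'
      · exact absurd (by rw [hco, hh'] : g.2 = e.2) (h2 g hh)
      · exact h.2 g hh g' hh' hco

lemma feas_finite (w : α × β → ℝ) (A : Finset α) (B : Finset β) (L : Finset (α × β)) :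
    {x : ℝ | ∃ M : Finset (α × β),
      IsMatching M ∧ M ⊆ A ×ˢ B ∧ L ⊆ M ∧ x = ∑ e ∈ M, w e}.Finite := by
  apply Set.Finite.subset (((A ×ˢ B).powerset.finite_toSet).image (fun M => ∑ e ∈ M, w e))
  rintro x ⟨M, _, h2, _, rfl⟩
  exact ⟨M, mem_coe.mpr (mem_powerset.mpr h2), rfl⟩

lemma le_maxW {w : α × β → ℝ} {A : Finset α} {B : Finset β} {L M : Finset (α × β)}
    (h1 : IsMatching M) (h2 : M ⊆ A ×ˢ B) (h3 : L ⊆ M) :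
    ∑ e ∈ M, w e ≤ maxW w A B L :=
  le_csSup (feas_finite w A B L).bddAbove ⟨M, h1, h2, h3, rfl⟩

lemma maxW_attained {w : α × β → ℝ} {A : Finset α} {B : Finset β} {L : Finset (α × β)}
    (hne : ∃ M : Finset (α × β), IsMatching M ∧ M ⊆ A ×ˢ B ∧ L ⊆ M) :
    ∃ M : Finset (α × β), IsMatching M ∧ M ⊆ A ×ˢ B ∧ L ⊆ M ∧
      maxW w A B L = ∑ e ∈ M, w e := by
  obtain ⟨M0, h⟩ := hne
  have hmem : sSup {x : ℝ | ∃ M : Finset (α × β),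
      IsMatching M ∧ M ⊆ A ×ˢ B ∧ L ⊆ M ∧ x = ∑ e ∈ M, w e} ∈
      {x : ℝ | ∃ M : Finset (α × β),
      IsMatching M ∧ M ⊆ A ×ˢ B ∧ L ⊆ M ∧ x = ∑ e ∈ M, w e} :=
    Set.Nonempty.csSup_mem ⟨∑ e ∈ M0, w e, M0, h.1, h.2.1, h.2.2, rfl⟩ (feas_finite w A B L)
  exact hmem

lemma exchange (w : α × β → ℝ) :
    ∀ n : ℕ, ∀ M2 M1 L : Finset (α × β), ∀ S : Finset α, ∀ R1 R2 : Finset β, ∀ x : α,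
      M2.card ≤ n →
      IsMatching M1 → IsMatching M2 → L ⊆ M1 → L ⊆ M2 →
      (∀ e ∈ M1, e.1 ∈ S) → (∀ e ∈ M2, e.1 ∈ S ∨ e.1 = x) →
      (∀ e ∈ M1, e.2 ∈ R1) → (∀ e ∈ M2, e.2 ∈ R2) → R2 ⊆ R1 → x ∉ S →
      ∃ N1 N2 : Finset (α × β),
        IsMatching N1 ∧ IsMatching N2 ∧ L ⊆ N1 ∧ L ⊆ N2 ∧
        N1 ⊆ M1 ∪ M2 ∧ N2 ⊆ M1 ∪ M2 ∧
        (∀ e ∈ N1, e.1 ∈ S ∨ e.1 = x) ∧ (∀ e ∈ N1, e.2 ∈ R1) ∧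
        (∀ e ∈ N2, e.1 ∈ S) ∧ (∀ e ∈ N2, e.2 ∈ R2) ∧
        ∑ e ∈ N1, w e + ∑ e ∈ N2, w e = ∑ e ∈ M1, w e + ∑ e ∈ M2, w e := by
  intro n
  induction n with
  | zero =>
    intro M2 M1 L S R1 R2 x hcard hm1 hm2 hL1 hL2 hS1 hS2 hR1 hR2 hR21 hxS
    have hM2e : M2 = ∅ := card_eq_zero.mp (Nat.le_zero.mp hcard)
    subst hM2e
    exact ⟨M1, ∅, hm1, hm2, hL1, hL2, subset_union_left, empty_subset _,
      fun e he => Or.inl (hS1 e he), hR1, by simp, by simp, by simp⟩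
  | succ n ih =>
    intro M2 M1 L S R1 R2 x hcard hm1 hm2 hL1 hL2 hS1 hS2 hR1 hR2 hR21 hxS
    by_cases hx : ∃ e ∈ M2, e.1 = x
    · obtain ⟨e, heM2, hex⟩ := hx
      have heL : e ∉ L := fun h => hxS (hex ▸ hS1 e (hL1 h))
      by_cases hf : ∃ f ∈ M1, f.2 = e.2
      · obtain ⟨f, hfM1, hfe⟩ := hf
        have hfa : f.1 ∈ S := hS1 f hfM1
        have hfx : f.1 ≠ x := fun h => hxS (h ▸ hfa)
        have hfL : f ∉ L := by
          intro h
          have hfeq : f = e := hm2.2 f (hL2 h) e heM2 hfe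
          exact hfx (by rw [hfeq]; exact hex)
        have hcard' : (M2.erase e).card ≤ n := by
          have := card_erase_of_mem heM2; omega
        obtain ⟨N1, N2, hN1m, hN2m, hLN1, hLN2, hN1sub, hN2sub, hN1S, hN1R, hN2S, hN2R, hsum⟩ :=
          ih (M2.erase e) (M1.erase f) L (S.erase f.1) (R1.erase e.2) (R2.erase e.2) f.1
            hcard'
            (isMatching_subset hm1 (erase_subset f M1))
            (isMatching_subset hm2 (erase_subset e M2))
            (fun g hg => mem_erase.mpr ⟨fun hge => hfL (hge ▸ hg), hL1 hg⟩)
            (fun g hg => mem_erase.mpr ⟨fun hge => heL (hge ▸ hg), hL2 hg⟩)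
            (fun g hg => by
              obtain ⟨hgf, hgM1⟩ := mem_erase.mp hg
              exact mem_erase.mpr ⟨fun h => hgf (hm1.1 g hgM1 f hfM1 h), hS1 g hgM1⟩)
            (fun g hg => by
              obtain ⟨hge, hgM2⟩ := mem_erase.mp hg
              rcases hS2 g hgM2 with h | h
              · by_cases hgf1 : g.1 = f.1
                · exact Or.inr hgf1
                · exact Or.inl (mem_erase.mpr ⟨hgf1, h⟩)
              · exact absurd (hm2.1 g hgM2 e heM2 (h.trans hex.symm)) hge)
            (fun g hg => by
              obtain ⟨hgf, hgM1⟩ := mem_erase.mp hg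
              exact mem_erase.mpr
                ⟨fun h => hgf (hm1.2 g hgM1 f hfM1 (h.trans hfe.symm)), hR1 g hgM1⟩)
            (fun g hg => by
              obtain ⟨hge, hgM2⟩ := mem_erase.mp hg
              exact mem_erase.mpr ⟨fun h => hge (hm2.2 g hgM2 e heM2 h), hR2 g hgM2⟩)
            (erase_subset_erase _ hR21)
            (notMem_erase _ _)
        have heN1 : e ∉ N1 := by
          intro h
          rcases hN1S e h with h' | h'
          · exact hxS (hex ▸ mem_of_mem_erase h')
          · exact hfx (h'.symm.trans hex)
        have hfN2 : f ∉ N2 := fun h => (mem_erase.mp (hN2S f h)).1 rfl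
        refine ⟨insert e N1, insert f N2, ?_, ?_, hLN1.trans (subset_insert _ _),
          hLN2.trans (subset_insert _ _), ?_, ?_, ?_, ?_, ?_, ?_, ?_⟩
        · refine isMatching_insert hN1m (fun g hg h => ?_) (fun g hg h => ?_)
          · rcases hN1S g hg with h' | h'
            · exact hxS (hex ▸ h ▸ mem_of_mem_erase h')
            · exact hfx ((h'.symm.trans h).trans hex)
          · exact (mem_erase.mp (hN1R g hg)).1 h
        · refine isMatching_insert hN2m (fun g hg h => ?_) (fun g hg h => ?_)
          · exact (mem_erase.mp (hN2S g hg)).1 h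
          · exact (mem_erase.mp (hN2R g hg)).1 (h.trans hfe)
        · exact insert_subset (mem_union_right _ heM2)
            (hN1sub.trans (union_subset_union (erase_subset _ _) (erase_subset _ _)))
        · exact insert_subset (mem_union_left _ hfM1)
            (hN2sub.trans (union_subset_union (erase_subset _ _) (erase_subset _ _)))
        · intro g hg
          rcases mem_insert.mp hg with rfl | hg
          · exact Or.inr hex
          · rcases hN1S g hg with h' | h'
            · exact Or.inl (mem_of_mem_erase h')
            · exact Or.inl (h' ▸ hfa)
        · intro g hg
          rcases mem_insert.mp hg with rfl | hg
          · exact hR21 (hR2 g heM2)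
          · exact mem_of_mem_erase (hN1R g hg)
        · intro g hg
          rcases mem_insert.mp hg with rfl | hg
          · exact hfa
          · exact mem_of_mem_erase (hN2S g hg)
        · intro g hg
          rcases mem_insert.mp hg with rfl | hg
          · exact hfe ▸ hR2 e heM2
          · exact mem_of_mem_erase (hN2R g hg)
        · rw [sum_insert heN1, sum_insert hfN2]
          have h1 : ∑ g ∈ M1.erase f, w g + w f = ∑ g ∈ M1, w g := sum_erase_add _ _ hfM1
          have h2 : ∑ g ∈ M2.erase e, w g + w e = ∑ g ∈ M2, w g := sum_erase_add _ _ heM2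
          linarith [hsum]
      · push_neg at hf
        have heM1 : e ∉ M1 := fun h => hxS (hex ▸ hS1 e h)
        refine ⟨insert e M1, M2.erase e, ?_,
          isMatching_subset hm2 (erase_subset _ _),
          hL1.trans (subset_insert _ _),
          (fun g hg => mem_erase.mpr ⟨fun h => heL (h ▸ hg), hL2 hg⟩),
          insert_subset (mem_union_right _ heM2) subset_union_left,
          (erase_subset _ _).trans subset_union_right,
          ?_, ?_, ?_, ?_, ?_⟩
        · refine isMatching_insert hm1 (fun g hg h => ?_) (fun g hg h => hf g hg h)
          exact hxS (hex ▸ h ▸ hS1 g hg)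
        · intro g hg
          rcases mem_insert.mp hg with rfl | hg
          · exact Or.inr hex
          · exact Or.inl (hS1 g hg)
        · intro g hg
          rcases mem_insert.mp hg with rfl | hg
          · exact hR21 (hR2 g heM2)
          · exact hR1 g hg
        · intro g hg
          obtain ⟨hge, hgM2⟩ := mem_erase.mp hg
          rcases hS2 g hgM2 with h | h
          · exact h
          · exact absurd (hm2.1 g hgM2 e heM2 (h.trans hex.symm)) hge
        · exact fun g hg => hR2 g (mem_of_mem_erase hg)
        · rw [sum_insert heM1]
          have h2 : ∑ g ∈ M2.erase e, w g + w e = ∑ g ∈ M2, w g := sum_erase_add _ _ heM2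
          linarith
    · push_neg at hx
      exact ⟨M1, M2, hm1, hm2, hL1, hL2, subset_union_left, subset_union_right,
        fun e he => Or.inl (hS1 e he), hR1,
        fun e he => (hS2 e he).resolve_right (hx e he), hR2, rfl⟩

end Helpers

/-- **Lemma 1.** In online maximum-weight matching with vertex locking,
for every right vertex `b ∈ B` the quantity
`ρ_t(b) = W(A_t, B, L_t) − W(A_t, B \ {b}, L_t)` (for `t < T_b`) and `ρ_t(b) = ν_b`
(for `t ≥ T_b`) is nondecreasing in `t`: for all `0 ≤ t < T`, `ρ_t(b) ≤ ρ_{t+1}(b)`. -/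
theorem rho_nondecreasing
    {α β : Type*} [DecidableEq α] [DecidableEq β]
    (A : Finset α) (B : Finset β) (w : α × β → ℝ)
    (hw : ∀ e, 0 ≤ w e)
    (Ta : α → ℕ) (Tb : β → ℕ) (T : ℕ)
    -- every arrival and every locking happens by the horizon `T`, lockings after time 0
    (hTaT : ∀ a ∈ A, Ta a ≤ T) (hTbT : ∀ b ∈ B, Tb b ≤ T)
    (hTb1 : ∀ b ∈ B, 1 ≤ Tb b)
    -- at each time step at most one event occurs
    (hTa_inj : ∀ a ∈ A, ∀ a' ∈ A, Ta a = Ta a' → a = a')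
    (hTb_inj : ∀ b ∈ B, ∀ b' ∈ B, Tb b = Tb b' → b = b')
    (hTaTb : ∀ a ∈ A, ∀ b ∈ B, Ta a ≠ Tb b)
    -- the locked edge sets `L t`, the chosen maximum-weight matchings `M t`,
    -- and the weights `ν b` collected by the algorithm
    (L : ℕ → Finset (α × β)) (M : ℕ → Finset (α × β)) (ν : β → ℝ)
    (hL0 : L 0 = ∅)
    -- `M t` is a fixed maximum-weight matching attaining `W(A_t, B, L_t)`
    (hM : ∀ t : ℕ, IsMatching (M t) ∧ M t ⊆ (A.filter fun a => Ta a ≤ t) ×ˢ B ∧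
      L t ⊆ M t ∧ ∑ e ∈ M t, w e = maxW w (A.filter fun a => Ta a ≤ t) B (L t))
    -- at non-locking steps the locked edge set is unchanged
    (hLarr : ∀ t : ℕ, (∀ b ∈ B, Tb b ≠ t + 1) → L (t + 1) = L t)
    -- when `b` locks at time `t+1`, the edge (if any) matched to `b` in `M t` is locked in
    (hLlock : ∀ t : ℕ, ∀ b ∈ B, Tb b = t + 1 →
      ((∃ a', (a', b) ∈ M t ∧ L (t + 1) = L t ∪ {(a', b)} ∧ ν b = w (a', b)) ∨
       ((∀ a', (a', b) ∉ M t) ∧ L (t + 1) = L t ∧ ν b = 0)))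
    (b : β) (hb : b ∈ B) :
    ∀ t : ℕ, t < T →
      (if t < Tb b then
          maxW w (A.filter fun a => Ta a ≤ t) B (L t)
            - maxW w (A.filter fun a => Ta a ≤ t) (B.erase b) (L t)
        else ν b)
      ≤ (if t + 1 < Tb b then
          maxW w (A.filter fun a => Ta a ≤ t + 1) B (L (t + 1))
            - maxW w (A.filter fun a => Ta a ≤ t + 1) (B.erase b) (L (t + 1))
        else ν b) := by
  have Lfact : ∀ t, ∀ e ∈ L t, e.2 ∈ B ∧ Tb e.2 ≤ t := by
    intro t
    induction t with
    | zero => simp [hL0]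
    | succ t ih =>
      by_cases hlock : ∃ b' ∈ B, Tb b' = t + 1
      · obtain ⟨b', hb'B, hb't⟩ := hlock
        rcases hLlock t b' hb'B hb't with ⟨a'', _, hLeq, _⟩ | ⟨_, hLeq, _⟩
        · intro e he
          rw [hLeq, mem_union] at he
          rcases he with he | he
          · exact ⟨(ih e he).1, (ih e he).2.trans (Nat.le_succ t)⟩
          · rw [mem_singleton] at he
            subst he
            exact ⟨hb'B, le_of_eq hb't⟩
        · rw [hLeq]
          intro e he
          exact ⟨(ih e he).1, (ih e he).2.trans (Nat.le_succ t)⟩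
      · push_neg at hlock
        rw [hLarr t hlock]
        intro e he
        exact ⟨(ih e he).1, (ih e he).2.trans (Nat.le_succ t)⟩
  intro t _
  obtain ⟨hMt_mat, hMt_sub, hLMt, hMt_max⟩ := hM t
  by_cases h1 : t + 1 < Tb b
  · have h0 : t < Tb b := by omega
    rw [if_pos h0, if_pos h1]
    by_cases hlock : ∃ b' ∈ B, Tb b' = t + 1
    · -- a vertex b' ≠ b locks at time t+1; the left set is unchanged
      obtain ⟨b', hb'B, hb't⟩ := hlock
      have hAeq : (A.filter fun a => Ta a ≤ t + 1) = (A.filter fun a => Ta a ≤ t) := by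
        ext a
        simp only [mem_filter, and_congr_right_iff]
        intro ha
        have hne : Ta a ≠ t + 1 := hb't ▸ hTaTb a ha b' hb'B
        omega
      rw [hAeq]
      rcases hLlock t b' hb'B hb't with ⟨a'', ha''M, hLeq, _⟩ | ⟨_, hLeq, _⟩
      · have hLt1 : L t ⊆ L (t + 1) := by rw [hLeq]; exact subset_union_left
        have hLsub' : L (t + 1) ⊆ M t := by
          rw [hLeq]
          exact union_subset hLMt (singleton_subset_iff.mpr ha''M)
        have hL'mat : IsMatching (L (t + 1)) := isMatching_subset hMt_mat hLsub'
        have hL'prodB : L (t + 1) ⊆ (A.filter fun a => Ta a ≤ t) ×ˢ B :=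
          hLsub'.trans hMt_sub
        have hL'prod : L (t + 1) ⊆ (A.filter fun a => Ta a ≤ t) ×ˢ (B.erase b) := by
          intro e he
          have hp := mem_product.mp (hL'prodB he)
          rw [mem_product]
          refine ⟨hp.1, mem_erase.mpr ⟨?_, hp.2⟩⟩
          intro hEq
          have hle := (Lfact (t + 1) e he).2
          rw [hEq] at hle
          omega
        have hA : maxW w (A.filter fun a => Ta a ≤ t) B (L (t + 1)) = ∑ e ∈ M t, w e := by
          apply le_antisymm
          · obtain ⟨Ms, hm, hsub, hLsub, heq⟩ :=
              maxW_attained ⟨L (t + 1), hL'mat, hL'prodB, subset_refl _⟩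
            rw [heq, hMt_max]
            exact le_maxW hm hsub (hLt1.trans hLsub)
          · exact le_maxW hMt_mat hMt_sub hLsub'
        have hB : maxW w (A.filter fun a => Ta a ≤ t) (B.erase b) (L (t + 1))
            ≤ maxW w (A.filter fun a => Ta a ≤ t) (B.erase b) (L t) := by
          obtain ⟨Ms, hm, hsub, hLsub, heq⟩ :=
            maxW_attained ⟨L (t + 1), hL'mat, hL'prod, subset_refl _⟩
          rw [heq]
          exact le_maxW hm hsub (hLt1.trans hLsub)
        linarith [hA, hB, hMt_max]
      · rw [hLeq]
    · -- no locking at time t+1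
      push_neg at hlock
      have hLeq := hLarr t hlock
      rw [hLeq]
      by_cases harr : ∃ a ∈ A, Ta a = t + 1
      · -- a left vertex a arrives at time t+1: exchange argument
        obtain ⟨a, haA, hat⟩ := harr
        have haS : a ∉ A.filter fun a' => Ta a' ≤ t := by
          intro h
          have := (mem_filter.mp h).2
          omega
        have hAsub : (A.filter fun a' => Ta a' ≤ t) ⊆ A.filter fun a' => Ta a' ≤ t + 1 := by
          intro a' ha'
          rw [mem_filter] at ha' ⊢
          exact ⟨ha'.1, ha'.2.trans (Nat.le_succ t)⟩
        have haA1 : a ∈ A.filter fun a' => Ta a' ≤ t + 1 :=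
          mem_filter.mpr ⟨haA, le_of_eq hat⟩
        have hLmat : IsMatching (L t) := isMatching_subset hMt_mat hLMt
        have hLprod : L t ⊆ (A.filter fun a' => Ta a' ≤ t + 1) ×ˢ (B.erase b) := by
          intro e he
          have hp := mem_product.mp (hMt_sub (hLMt he))
          rw [mem_product]
          refine ⟨hAsub hp.1, mem_erase.mpr ⟨?_, hp.2⟩⟩
          intro hEq
          have hle := (Lfact t e he).2
          rw [hEq] at hle
          omega
        obtain ⟨M2, hm2, hsub2, hL2, heq2⟩ := maxW_attained ⟨L t, hLmat, hLprod, subset_refl _⟩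
        obtain ⟨N1, N2, hN1m, hN2m, hLN1, hLN2, _, _, hN1S, hN1R, hN2S, hN2R, hsum⟩ :=
          exchange w M2.card M2 (M t) (L t) (A.filter fun a' => Ta a' ≤ t) B (B.erase b) a
            le_rfl hMt_mat hm2 hLMt hL2
            (fun e he => (mem_product.mp (hMt_sub he)).1)
            (fun e he => by
              have hp := mem_product.mp (hsub2 he)
              have h1' := mem_filter.mp hp.1
              by_cases hle : Ta e.1 ≤ t
              · exact Or.inl (mem_filter.mpr ⟨h1'.1, hle⟩)
              · have hEq : Ta e.1 = t + 1 := by omega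
                exact Or.inr (hTa_inj e.1 h1'.1 a haA (hEq.trans hat.symm)))
            (fun e he => (mem_product.mp (hMt_sub he)).2)
            (fun e he => (mem_product.mp (hsub2 he)).2)
            (erase_subset _ _) haS
        have hN1feas : N1 ⊆ (A.filter fun a' => Ta a' ≤ t + 1) ×ˢ B := by
          intro e he
          rw [mem_product]
          refine ⟨?_, hN1R e he⟩
          rcases hN1S e he with h | h
          · exact hAsub h
          · rw [h]; exact haA1
        have hN2feas : N2 ⊆ (A.filter fun a' => Ta a' ≤ t) ×ˢ (B.erase b) := by
          intro e he
          rw [mem_product]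
          exact ⟨hN2S e he, hN2R e he⟩
        have i1 : ∑ e ∈ N1, w e ≤ maxW w (A.filter fun a' => Ta a' ≤ t + 1) B (L t) :=
          le_maxW hN1m hN1feas hLN1
        have i2 : ∑ e ∈ N2, w e ≤ maxW w (A.filter fun a' => Ta a' ≤ t) (B.erase b) (L t) :=
          le_maxW hN2m hN2feas hLN2
        linarith [hsum, hMt_max, heq2]
      · -- nothing happens at time t+1
        push_neg at harr
        have hAeq : (A.filter fun a => Ta a ≤ t + 1) = (A.filter fun a => Ta a ≤ t) := by
          ext a
          simp only [mem_filter, and_congr_right_iff]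
          intro ha
          have hne := harr a ha
          omega
        rw [hAeq]
  · rw [if_neg h1]
    by_cases h2 : t < Tb b
    · rw [if_pos h2]
      have hTbb : Tb b = t + 1 := by omega
      rcases hLlock t b hb hTbb with ⟨a', ha'M, _, hν⟩ | ⟨hnone, _, hν⟩
      · rw [hν]
        have hfeas : (M t).erase (a', b) ⊆ (A.filter fun a'' => Ta a'' ≤ t) ×ˢ (B.erase b) := by
          intro e he
          have hp := mem_product.mp (hMt_sub (mem_of_mem_erase he))
          rw [mem_product]
          refine ⟨hp.1, mem_erase.mpr ⟨?_, hp.2⟩⟩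
          intro hEq
          have heq' : e = (a', b) := hMt_mat.2 e (mem_of_mem_erase he) (a', b) ha'M hEq
          exact (mem_erase.mp he).1 heq'
        have hLsubE : L t ⊆ (M t).erase (a', b) := by
          intro e he
          refine mem_erase.mpr ⟨?_, hLMt he⟩
          intro hEq
          have hne : e.2 ≠ b := by
            intro h
            have := (Lfact t e he).2
            rw [h] at this
            omega
          exact hne (by rw [hEq])
        have hle : ∑ e ∈ (M t).erase (a', b), w e
            ≤ maxW w (A.filter fun a'' => Ta a'' ≤ t) (B.erase b) (L t) :=
          le_maxW (isMatching_subset hMt_mat (erase_subset _ _)) hfeas hLsubE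
        have hsum := sum_erase_add (M t) w ha'M
        linarith [hMt_max]
      · rw [hν]
        have hfeas : M t ⊆ (A.filter fun a'' => Ta a'' ≤ t) ×ˢ (B.erase b) := by
          intro e he
          have hp := mem_product.mp (hMt_sub he)
          rw [mem_product]
          refine ⟨hp.1, mem_erase.mpr ⟨?_, hp.2⟩⟩
          intro hEq
          apply hnone e.1
          rw [← hEq]
          exact he
        have hle : ∑ e ∈ M t, w e
            ≤ maxW w (A.filter fun a'' => Ta a'' ≤ t) (B.erase b) (L t) :=
          le_maxW hMt_mat hfeas hLMt
        linarith [hMt_max]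
    · rw [if_neg h2]
end

section
/- Let L ⊆ A × B be a matching and let b, b' ∈ B be distinct right vertices not covered by L. Let M be a maximum-weight matching among matchings in A × B containing L (so the weight of M equals W(A,B,L)), and suppose (a',b') ∈ M. Then W(A, B, L ∪ {(a',b')}) = W(A, B, L) and W(A, B \ {b}, L ∪ {(a',b')}) ≤ W(A, B \ {b}, L); consequently W(A, B, L ∪ {(a',b')}) − W(A, B \ {b}, L ∪ {(a',b')}) ≥ W(A, B, L) − W(A, B \ {b}, L). -/
open Finset

/-- If `L` is a matching, `b ≠ b'` are right vertices not covered by `L`,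
`M` is a maximum-weight matching among matchings in `A × B` containing `L`, and
`(a',b') ∈ M`, then locking in the edge `(a',b')` does not change `W(A,B,·)`, does not
increase `W(A,B\{b},·)`, and hence does not decrease their difference. -/
theorem lock_edge_exchange
    {α β : Type*} [DecidableEq α] [DecidableEq β]
    (A : Finset α) (B : Finset β) (w : α × β → ℝ)
    (hw : ∀ e, 0 ≤ w e)
    (L : Finset (α × β)) (hLmatch : IsMatching L) (hLsub : L ⊆ A ×ˢ B)
    (b b' : β) (hb : b ∈ B) (hb' : b' ∈ B) (hne : b ≠ b')
    (hbL : ∀ a, (a, b) ∉ L) (hb'L : ∀ a, (a, b') ∉ L)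
    (M : Finset (α × β)) (hMmatch : IsMatching M) (hMsub : M ⊆ A ×ˢ B)
    (hLM : L ⊆ M) (hMmax : ∑ e ∈ M, w e = maxW w A B L)
    (a' : α) (ha' : (a', b') ∈ M) :
    maxW w A B (L ∪ {(a', b')}) = maxW w A B L ∧
    maxW w A (B.erase b) (L ∪ {(a', b')}) ≤ maxW w A (B.erase b) L ∧
    maxW w A B (L ∪ {(a', b')}) - maxW w A (B.erase b) (L ∪ {(a', b')})
      ≥ maxW w A B L - maxW w A (B.erase b) L := by
  classical
  have ha'AB := hMsub ha'
  rw [Finset.mem_product] at ha'AB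
  obtain ⟨ha'A, hb'B⟩ := ha'AB
  -- a' is not covered by L
  have ha'L : ∀ c, (a', c) ∉ L := by
    intro c hc
    have hcM : (a', c) ∈ M := hLM hc
    have := hMmatch.1 _ hcM _ ha' rfl
    rw [this] at hc
    exact hb'L a' hc
  -- L ∪ {(a',b')} is a matching
  have hLe : IsMatching (L ∪ {(a', b')}) := by
    constructor
    · rintro ⟨x1, y1⟩ h1 ⟨x2, y2⟩ h2 heq
      have heq' : x1 = x2 := heq
      simp only [Finset.mem_union, Finset.mem_singleton, Prod.mk.injEq] at h1 h2
      rcases h1 with h1 | h1 <;> rcases h2 with h2 | h2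
      · exact hLmatch.1 _ h1 _ h2 heq
      · exact absurd (show (a', y1) ∈ L by rw [← h2.1, ← heq']; exact h1) (ha'L y1)
      · exact absurd (show (a', y2) ∈ L by rw [← h1.1, heq']; exact h2) (ha'L y2)
      · rw [Prod.mk.injEq, h1.2, h2.2]; exact ⟨heq', rfl⟩
    · rintro ⟨x1, y1⟩ h1 ⟨x2, y2⟩ h2 heq
      have heq' : y1 = y2 := heq
      simp only [Finset.mem_union, Finset.mem_singleton, Prod.mk.injEq] at h1 h2
      rcases h1 with h1 | h1 <;> rcases h2 with h2 | h2
      · exact hLmatch.2 _ h1 _ h2 heq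
      · exact absurd (show (x1, b') ∈ L by rw [← h2.2, ← heq']; exact h1) (hb'L x1)
      · exact absurd (show (x2, b') ∈ L by rw [← h1.2, heq']; exact h2) (hb'L x2)
      · rw [Prod.mk.injEq, h1.1, h2.1]; exact ⟨rfl, heq'⟩
  have hLMe : L ∪ {(a', b')} ⊆ M :=
    Finset.union_subset hLM (Finset.singleton_subset_iff.mpr ha')
  -- boundedness
  have hbdd : ∀ (B' : Finset β) (L' : Finset (α × β)),
      BddAbove {x : ℝ | ∃ N : Finset (α × β),
        IsMatching N ∧ N ⊆ A ×ˢ B' ∧ L' ⊆ N ∧ x = ∑ e ∈ N, w e} := by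
    intro B' L'
    refine ⟨∑ e ∈ A ×ˢ B', w e, ?_⟩
    rintro x ⟨N, -, hsub, -, rfl⟩
    exact Finset.sum_le_sum_of_subset_of_nonneg hsub (fun i _ _ => hw i)
  have hsubset : ∀ (B' : Finset β),
      {x : ℝ | ∃ N : Finset (α × β), IsMatching N ∧ N ⊆ A ×ˢ B' ∧ L ∪ {(a', b')} ⊆ N ∧ x = ∑ e ∈ N, w e} ⊆
      {x : ℝ | ∃ N : Finset (α × β), IsMatching N ∧ N ⊆ A ×ˢ B' ∧ L ⊆ N ∧ x = ∑ e ∈ N, w e} := by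
    intro B' x hx
    obtain ⟨N, h1, h2, h3, h4⟩ := hx
    exact ⟨N, h1, h2, Finset.subset_union_left.trans h3, h4⟩
  have hmemM : (∑ e ∈ M, w e) ∈ {x : ℝ | ∃ N : Finset (α × β), IsMatching N ∧ N ⊆ A ×ˢ B ∧
      L ∪ {(a', b')} ⊆ N ∧ x = ∑ e ∈ N, w e} := ⟨M, hMmatch, hMsub, hLMe, rfl⟩
  have h1 : maxW w A B (L ∪ {(a', b')}) = maxW w A B L := by
    apply le_antisymm
    · exact csSup_le_csSup (hbdd B L) ⟨_, hmemM⟩ (hsubset B)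
    · rw [← hMmax]
      exact le_csSup (hbdd B (L ∪ {(a', b')})) hmemM
  -- nonemptiness for erased set
  have hLeSub : L ∪ {(a', b')} ⊆ A ×ˢ (B.erase b) := by
    apply Finset.union_subset
    · rintro ⟨x, y⟩ hp
      have := hLsub hp
      rw [Finset.mem_product] at this ⊢
      refine ⟨this.1, Finset.mem_erase.mpr ⟨?_, this.2⟩⟩
      rintro rfl
      exact hbL x hp
    · simp only [Finset.singleton_subset_iff, Finset.mem_product]
      exact ⟨ha'A, Finset.mem_erase.mpr ⟨hne.symm, hb'B⟩⟩
  have hne2 : Set.Nonempty {x : ℝ | ∃ N : Finset (α × β), IsMatching N ∧ N ⊆ A ×ˢ (B.erase b) ∧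
      L ∪ {(a', b')} ⊆ N ∧ x = ∑ e ∈ N, w e} :=
    ⟨∑ e ∈ L ∪ {(a', b')}, w e, L ∪ {(a', b')}, hLe, hLeSub, Finset.Subset.refl _, rfl⟩
  have h2 : maxW w A (B.erase b) (L ∪ {(a', b')}) ≤ maxW w A (B.erase b) L :=
    csSup_le_csSup (hbdd (B.erase b) L) hne2 (hsubset (B.erase b))
  exact ⟨h1, h2, sub_le_sub h1.ge h2⟩
end

section
/- Let L ⊆ A × B be a matching and let b ∈ B be a right vertex not covered by L. If M is a maximum-weight matching among matchings in A × B containing L and (a',b) ∈ M, then w(a',b) ≥ W(A, B, L) − W(A, B \ {b}, L). -/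
open Finset

lemma maxW_bddAbove {α β : Type*} (w : α × β → ℝ) (hw : ∀ e, 0 ≤ w e)
    (A : Finset α) (B : Finset β) (L : Finset (α × β)) :
    BddAbove {x : ℝ | ∃ M : Finset (α × β),
      IsMatching M ∧ M ⊆ A ×ˢ B ∧ L ⊆ M ∧ x = ∑ e ∈ M, w e} := by
  refine ⟨∑ e ∈ A ×ˢ B, w e, ?_⟩
  rintro x ⟨M, _, hMsub, _, rfl⟩
  exact Finset.sum_le_sum_of_subset_of_nonneg hMsub (fun e _ _ => hw e)

/-- If `L` is a matching, `b ∈ B` is not covered by `L`, `M` is a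
maximum-weight matching among matchings in `A × B` containing `L`, and `(a',b) ∈ M`,
then `w(a',b) ≥ W(A, B, L) − W(A, B \ {b}, L)`. -/
theorem locked_weight_ge_marginal
    {α β : Type*} [DecidableEq α] [DecidableEq β]
    (A : Finset α) (B : Finset β) (w : α × β → ℝ)
    (hw : ∀ e, 0 ≤ w e)
    (L : Finset (α × β)) (hLmatch : IsMatching L) (hLsub : L ⊆ A ×ˢ B)
    (b : β) (hb : b ∈ B) (hbL : ∀ a, (a, b) ∉ L)
    (M : Finset (α × β)) (hMmatch : IsMatching M) (hMsub : M ⊆ A ×ˢ B)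
    (hLM : L ⊆ M) (hMmax : ∑ e ∈ M, w e = maxW w A B L)
    (a' : α) (ha' : (a', b) ∈ M) :
    w (a', b) ≥ maxW w A B L - maxW w A (B.erase b) L := by
  set M' : Finset (α × β) := M.erase (a', b) with hM'
  have hM'match : IsMatching M' := by
    obtain ⟨h1, h2⟩ := hMmatch
    exact ⟨fun e he e' he' h => h1 e (Finset.mem_of_mem_erase he) e'
      (Finset.mem_of_mem_erase he') h,
      fun e he e' he' h => h2 e (Finset.mem_of_mem_erase he) e'
      (Finset.mem_of_mem_erase he') h⟩
  have hM'sub : M' ⊆ A ×ˢ (B.erase b) := by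
    intro e he
    have heM : e ∈ M := Finset.mem_of_mem_erase he
    have hne : e ≠ (a', b) := Finset.ne_of_mem_erase he
    have heAB := hMsub heM
    rw [Finset.mem_product] at heAB
    rw [Finset.mem_product]
    refine ⟨heAB.1, Finset.mem_erase.2 ⟨?_, heAB.2⟩⟩
    intro h2b
    exact hne (hMmatch.2 e heM (a', b) ha' h2b)
  have hLM' : L ⊆ M' := by
    intro e heL
    refine Finset.mem_erase.2 ⟨?_, hLM heL⟩
    rintro rfl
    exact hbL a' heL
  have hmem : (∑ e ∈ M', w e) ∈ {x : ℝ | ∃ N : Finset (α × β),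
      IsMatching N ∧ N ⊆ A ×ˢ (B.erase b) ∧ L ⊆ N ∧ x = ∑ e ∈ N, w e} :=
    ⟨M', hM'match, hM'sub, hLM', rfl⟩
  have hle : (∑ e ∈ M', w e) ≤ maxW w A (B.erase b) L :=
    le_csSup (maxW_bddAbove w hw A (B.erase b) L) hmem
  have hsum : ∑ e ∈ M', w e = (∑ e ∈ M, w e) - w (a', b) :=
    Finset.sum_erase_eq_sub ha'
  rw [hsum, hMmax] at hle
  linarith
end

section
/- (Exchange inequality for constrained maximum-weight bipartite matchings.) Let a ∈ A, b ∈ B, and let L ⊆ (A \ {a}) × (B \ {b}) be a matching. Then W(A, B, L) + W(A \ {a}, B \ {b}, L) ≥ W(A, B \ {b}, L) + W(A \ {a}, B, L). -/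
open Finset

section Aux

variable {α β : Type*} [DecidableEq α] [DecidableEq β]

/-- Edges reachable from the `M1`-edge at `a` by alternating steps. -/
inductive Reach (M1 M2 : Finset (α × β)) (a : α) : α × β → Prop
  | base {e : α × β} (h1 : e ∈ M1) (ha : e.1 = a) : Reach M1 M2 a e
  | step1 {e f : α × β} (he : Reach M1 M2 a e) (he1 : e ∈ M1) (hf : f ∈ M2)
      (h : f.2 = e.2) : Reach M1 M2 a f
  | step2 {e f : α × β} (he : Reach M1 M2 a e) (he2 : e ∈ M2) (hf : f ∈ M1)
      (h : f.1 = e.1) : Reach M1 M2 a f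

lemma reach_mem {M1 M2 : Finset (α × β)} {a : α} {e : α × β}
    (h : Reach M1 M2 a e) : e ∈ M1 ∪ M2 := by
  induction h with
  | base h1 _ => exact Finset.mem_union_left _ h1
  | step1 _ _ hf h ih => exact Finset.mem_union_right _ hf
  | step2 _ _ hf h ih => exact Finset.mem_union_left _ hf

lemma reach_snd_ne {M1 M2 : Finset (α × β)} {a : α} {b : β}
    (hM1b : ∀ e ∈ M1, e.2 ≠ b) {e : α × β}
    (h : Reach M1 M2 a e) : e.2 ≠ b := by
  induction h with
  | base h1 _ => exact hM1b _ h1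
  | step1 _ _ hf h ih => rw [h]; exact ih
  | step2 _ _ hf h ih => exact hM1b _ hf

lemma reach_aux {M1 M2 : Finset (α × β)} {a : α}
    (h1 : IsMatching M1) (h2 : IsMatching M2)
    (hM2a : ∀ f ∈ M2, f.1 ≠ a) {e : α × β}
    (h : Reach M1 M2 a e) :
    (e ∈ M1 → ∀ f ∈ M2, f.1 = e.1 → Reach M1 M2 a f) ∧
    (e ∈ M2 → ∀ f ∈ M1, f.2 = e.2 → Reach M1 M2 a f) := by
  induction h with
  | @base e he1 ha =>
      refine ⟨fun _ f hf hfe => absurd (hfe.trans ha) (hM2a f hf), ?_⟩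
      intro he2 f hf hfe
      have : f = e := h1.2 f hf e he1 hfe
      subst this
      exact Reach.base hf ha
  | @step1 e f he he1 hf hfe ih =>
      constructor
      · intro hf1 g hg hge
        have : f = e := h1.2 f hf1 e he1 hfe
        subst this
        exact ih.1 hf1 g hg hge
      · intro _ g hg hge
        have : g = e := h1.2 g hg e he1 (hge.trans hfe)
        subst this
        exact he
  | @step2 e f he he2 hf hfe ih =>
      constructor
      · intro _ g hg hge
        have : g = e := h2.1 g hg e he2 (hge.trans hfe)
        subst this
        exact he
      · intro hf2 g hg hge
        have : g = f := h1.2 g hg f hf hge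
        subst this
        exact Reach.step2 he he2 hf hfe

lemma reach_closed {M1 M2 : Finset (α × β)} {a : α}
    (h1 : IsMatching M1) (h2 : IsMatching M2)
    (hM2a : ∀ f ∈ M2, f.1 ≠ a) {e f : α × β}
    (he : Reach M1 M2 a e) (hf : f ∈ M1 ∪ M2)
    (hs : f.1 = e.1 ∨ f.2 = e.2) : Reach M1 M2 a f := by
  have hem := reach_mem he
  rcases Finset.mem_union.1 hem with he1 | he2 <;>
    rcases Finset.mem_union.1 hf with hf1 | hf2 <;> rcases hs with hs | hs
  · exact (h1.1 f hf1 e he1 hs) ▸ he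
  · exact (h1.2 f hf1 e he1 hs) ▸ he
  · exact (reach_aux h1 h2 hM2a he).1 he1 f hf2 hs
  · exact Reach.step1 he he1 hf2 hs
  · exact Reach.step2 he he2 hf1 hs
  · exact (reach_aux h1 h2 hM2a he).2 he2 f hf1 hs
  · exact (h2.1 f hf2 e he2 hs) ▸ he
  · exact (h2.2 f hf2 e he2 hs) ▸ he

lemma IsMatching.subset {M N : Finset (α × β)} (h : N ⊆ M) (hM : IsMatching M) :
    IsMatching N :=
  ⟨fun e he e' he' hh => hM.1 e (h he) e' (h he') hh,
   fun e he e' he' hh => hM.2 e (h he) e' (h he') hh⟩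

lemma IsMatching.union {X Y : Finset (α × β)}
    (hX : IsMatching X) (hY : IsMatching Y)
    (hsep : ∀ e ∈ X, ∀ f ∈ Y, (e.1 = f.1 ∨ e.2 = f.2) → e = f) :
    IsMatching (X ∪ Y) := by
  constructor <;> intro e he e' he' h <;>
    rcases Finset.mem_union.1 he with h1 | h1 <;>
    rcases Finset.mem_union.1 he' with h2 | h2
  · exact hX.1 e h1 e' h2 h
  · exact hsep e h1 e' h2 (Or.inl h)
  · exact (hsep e' h2 e h1 (Or.inl h.symm)).symm
  · exact hY.1 e h1 e' h2 h
  · exact hX.2 e h1 e' h2 h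
  · exact hsep e h1 e' h2 (Or.inr h)
  · exact (hsep e' h2 e h1 (Or.inr h.symm)).symm
  · exact hY.2 e h1 e' h2 h

lemma exchange_step
    (A : Finset α) (B : Finset β) (w : α × β → ℝ) (a : α) (b : β)
    (M1 M2 L : Finset (α × β))
    (h1 : IsMatching M1) (h2 : IsMatching M2)
    (hM1 : M1 ⊆ A ×ˢ (B.erase b)) (hM2 : M2 ⊆ (A.erase a) ×ˢ B)
    (hL1 : L ⊆ M1) (hL2 : L ⊆ M2) :
    ∃ N1 N2 : Finset (α × β),
      IsMatching N1 ∧ N1 ⊆ A ×ˢ B ∧ L ⊆ N1 ∧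
      IsMatching N2 ∧ N2 ⊆ (A.erase a) ×ˢ (B.erase b) ∧ L ⊆ N2 ∧
      ∑ e ∈ N1, w e + ∑ e ∈ N2, w e = ∑ e ∈ M1, w e + ∑ e ∈ M2, w e := by
  classical
  have hM2a : ∀ f ∈ M2, f.1 ≠ a := fun f hf =>
    (Finset.mem_erase.1 (Finset.mem_product.1 (hM2 hf)).1).1
  have hM1b : ∀ e ∈ M1, e.2 ≠ b := fun e hee =>
    (Finset.mem_erase.1 (Finset.mem_product.1 (hM1 hee)).2).1
  set S : Finset (α × β) := (M1 ∪ M2).filter (fun e => Reach M1 M2 a e) with hS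
  have memS : ∀ e, e ∈ S ↔ (e ∈ M1 ∪ M2 ∧ Reach M1 M2 a e) := by
    intro e; simp [hS, Finset.mem_filter]
  have reach_S : ∀ {e}, Reach M1 M2 a e → e ∈ S := fun {e} h =>
    (memS e).2 ⟨reach_mem h, h⟩
  refine ⟨(M2 \ S) ∪ (M1 ∩ S), (M1 \ S) ∪ (M2 ∩ S), ?_, ?_, ?_, ?_, ?_, ?_, ?_⟩
  · -- IsMatching N1
    refine IsMatching.union (IsMatching.subset Finset.sdiff_subset h2)
      (IsMatching.subset Finset.inter_subset_left h1) ?_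
    intro e heM f hfM hs
    exfalso
    have hf : Reach M1 M2 a f := ((memS f).1 (Finset.mem_inter.1 hfM).2).2
    have : Reach M1 M2 a e := reach_closed h1 h2 hM2a hf
      (Finset.mem_union_right _ (Finset.mem_sdiff.1 heM).1)
      hs
    exact (Finset.mem_sdiff.1 heM).2 (reach_S this)
  · -- N1 ⊆ A ×ˢ B
    apply Finset.union_subset
    · exact Finset.sdiff_subset.trans (hM2.trans
        (Finset.product_subset_product (Finset.erase_subset _ _) Finset.Subset.rfl))
    · exact Finset.inter_subset_left.trans (hM1.trans
        (Finset.product_subset_product Finset.Subset.rfl (Finset.erase_subset _ _)))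
  · -- L ⊆ N1
    intro e heL
    by_cases hSe : e ∈ S
    · exact Finset.mem_union_right _ (Finset.mem_inter.2 ⟨hL1 heL, hSe⟩)
    · exact Finset.mem_union_left _ (Finset.mem_sdiff.2 ⟨hL2 heL, hSe⟩)
  · -- IsMatching N2
    refine IsMatching.union (IsMatching.subset Finset.sdiff_subset h1)
      (IsMatching.subset Finset.inter_subset_left h2) ?_
    intro e heM f hfM hs
    exfalso
    have hf : Reach M1 M2 a f := ((memS f).1 (Finset.mem_inter.1 hfM).2).2
    have : Reach M1 M2 a e := reach_closed h1 h2 hM2a hf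
      (Finset.mem_union_left _ (Finset.mem_sdiff.1 heM).1)
      hs
    exact (Finset.mem_sdiff.1 heM).2 (reach_S this)
  · -- N2 ⊆ (A.erase a) ×ˢ (B.erase b)
    apply Finset.union_subset
    · intro e hee
      obtain ⟨he1, heS⟩ := Finset.mem_sdiff.1 hee
      have hp := Finset.mem_product.1 (hM1 he1)
      refine Finset.mem_product.2 ⟨Finset.mem_erase.2 ⟨?_, hp.1⟩,
        Finset.mem_erase.2 ⟨hM1b e he1, (Finset.mem_erase.1 hp.2).2⟩⟩
      intro hea
      exact heS (reach_S (Reach.base he1 hea))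
    · intro e hee
      obtain ⟨he2, heS⟩ := Finset.mem_inter.1 hee
      have hp := Finset.mem_product.1 (hM2 he2)
      exact Finset.mem_product.2 ⟨hp.1,
        Finset.mem_erase.2 ⟨reach_snd_ne hM1b ((memS e).1 heS).2, hp.2⟩⟩
  · -- L ⊆ N2
    intro e heL
    by_cases hSe : e ∈ S
    · exact Finset.mem_union_right _ (Finset.mem_inter.2 ⟨hL2 heL, hSe⟩)
    · exact Finset.mem_union_left _ (Finset.mem_sdiff.2 ⟨hL1 heL, hSe⟩)
  · -- sums
    have d1 : Disjoint (M2 \ S) (M1 ∩ S) := by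
      rw [Finset.disjoint_left]
      intro e he hf
      exact (Finset.mem_sdiff.1 he).2 (Finset.mem_inter.1 hf).2
    have d2 : Disjoint (M1 \ S) (M2 ∩ S) := by
      rw [Finset.disjoint_left]
      intro e he hf
      exact (Finset.mem_sdiff.1 he).2 (Finset.mem_inter.1 hf).2
    rw [Finset.sum_union d1, Finset.sum_union d2]
    have e1 : ∑ e ∈ M1 ∩ S, w e + ∑ e ∈ M1 \ S, w e = ∑ e ∈ M1, w e :=
      Finset.sum_inter_add_sum_sdiff M1 S w
    have e2 : ∑ e ∈ M2 ∩ S, w e + ∑ e ∈ M2 \ S, w e = ∑ e ∈ M2, w e :=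
      Finset.sum_inter_add_sum_sdiff M2 S w
    linarith

end Aux

lemma maxW_spec {α β : Type*} [DecidableEq α] [DecidableEq β]
    (w : α × β → ℝ) (A : Finset α) (B : Finset β) (L : Finset (α × β))
    (hL : IsMatching L) (hLs : L ⊆ A ×ˢ B) :
    (∃ M : Finset (α × β), IsMatching M ∧ M ⊆ A ×ˢ B ∧ L ⊆ M ∧
        maxW w A B L = ∑ e ∈ M, w e) ∧
    (∀ M : Finset (α × β), IsMatching M → M ⊆ A ×ˢ B → L ⊆ M →
        ∑ e ∈ M, w e ≤ maxW w A B L) := by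
  set T : Set ℝ := {x : ℝ | ∃ M : Finset (α × β),
    IsMatching M ∧ M ⊆ A ×ˢ B ∧ L ⊆ M ∧ x = ∑ e ∈ M, w e} with hT
  have hfin : T.Finite := by
    apply Set.Finite.subset
      (Set.Finite.image (fun M : Finset (α × β) => ∑ e ∈ M, w e)
        ((A ×ˢ B).powerset).finite_toSet)
    rintro x ⟨M, _, hMs, _, rfl⟩
    exact ⟨M, Finset.mem_coe.2 (Finset.mem_powerset.2 hMs), rfl⟩
  have hne : T.Nonempty := ⟨∑ e ∈ L, w e, L, hL, hLs, Finset.Subset.rfl, rfl⟩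
  have hmem : maxW w A B L ∈ T := hne.csSup_mem hfin
  constructor
  · obtain ⟨M, hM1, hM2, hM3, hM4⟩ := hmem
    exact ⟨M, hM1, hM2, hM3, hM4⟩
  · intro M h1 h2 h3
    exact le_csSup hfin.bddAbove ⟨M, h1, h2, h3, rfl⟩

/-- **exchange inequality for constrained maximum-weight bipartite
matchings.** For `a ∈ A`, `b ∈ B`, and a matching `L ⊆ (A \ {a}) × (B \ {b})`,
`W(A, B, L) + W(A \ {a}, B \ {b}, L) ≥ W(A, B \ {b}, L) + W(A \ {a}, B, L)`. -/
theorem maxW_exchange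
    {α β : Type*} [DecidableEq α] [DecidableEq β]
    (A : Finset α) (B : Finset β) (w : α × β → ℝ)
    (hw : ∀ e, 0 ≤ w e)
    (a : α) (ha : a ∈ A) (b : β) (hb : b ∈ B)
    (L : Finset (α × β)) (hLmatch : IsMatching L)
    (hLsub : L ⊆ (A.erase a) ×ˢ (B.erase b)) :
    maxW w A B L + maxW w (A.erase a) (B.erase b) L
      ≥ maxW w A (B.erase b) L + maxW w (A.erase a) B L := by
  have hL1 : L ⊆ A ×ˢ (B.erase b) :=
    hLsub.trans (Finset.product_subset_product (Finset.erase_subset _ _) Finset.Subset.rfl)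
  have hL2 : L ⊆ (A.erase a) ×ˢ B :=
    hLsub.trans (Finset.product_subset_product Finset.Subset.rfl (Finset.erase_subset _ _))
  have hL0 : L ⊆ A ×ˢ B :=
    hL1.trans (Finset.product_subset_product Finset.Subset.rfl (Finset.erase_subset _ _))
  obtain ⟨M1, hM1m, hM1s, hM1L, hM1v⟩ :=
    (maxW_spec w A (B.erase b) L hLmatch hL1).1
  obtain ⟨M2, hM2m, hM2s, hM2L, hM2v⟩ :=
    (maxW_spec w (A.erase a) B L hLmatch hL2).1
  obtain ⟨N1, N2, hN1m, hN1s, hN1L, hN2m, hN2s, hN2L, hsum⟩ :=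
    exchange_step A B w a b M1 M2 L hM1m hM2m hM1s hM2s hM1L hM2L
  have i1 := (maxW_spec w A B L hLmatch hL0).2 N1 hN1m hN1s hN1L
  have i2 := (maxW_spec w (A.erase a) (B.erase b) L hLmatch hLsub).2 _ hN2m hN2s hN2L
  rw [ge_iff_le, hM1v, hM2v]
  linarith
end

section
/- (Theorem 2: the greedy algorithm is 2-competitive for online resource allocation with locking.) The output G of the greedy algorithm (Algorithm 2) satisfies Z(G) ≥ (1/2) · max{ Z(S) : S a feasible allocation }, i.e., the greedy online solution attains at least half the value of the optimal offline feasible allocation. -/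
open Finset

/-- An allocation assigns each resource to at most one bin, using only resources in `R`
and bins in `Bins`. -/
def IsAllocation {ρ β : Type*} (R : Finset ρ) (Bins : Finset β)
    (S : Finset (ρ × β)) : Prop :=
  S ⊆ R ×ˢ Bins ∧ ∀ e ∈ S, ∀ e' ∈ S, e.1 = e'.1 → e = e'

/-- An allocation is feasible if every resource is allocated to a bin that locks no
earlier than the resource's arrival. -/
def Feasible {ρ β : Type*} (Tr : ρ → ℕ∞) (Tb : β → ℕ∞)
    (S : Finset (ρ × β)) : Prop :=
  ∀ e ∈ S, Tr e.1 ≤ Tb e.2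

/-- Marginal-sum bound for submodular functions: the gain of adding a whole set is at
most the sum of the individual marginal gains. -/
lemma marginal_sum_bound {γ : Type*} [DecidableEq γ]
    (Z : Finset γ → ℝ)
    (hZsub : ∀ (S T : Finset γ) (x : γ), S ⊆ T → x ∉ T →
      Z (insert x T) - Z T ≤ Z (insert x S) - Z S)
    (T : Finset γ) (A : Finset γ) :
    Z (A ∪ T) - Z T ≤ ∑ x ∈ A \ T, (Z (insert x T) - Z T) := by
  induction A using Finset.induction_on with
  | empty => simp
  | @insert a A ha ih =>
    by_cases haT : a ∈ T
    · rw [Finset.insert_union, Finset.insert_eq_self.2 (Finset.mem_union_right _ haT),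
        Finset.insert_sdiff_of_mem _ haT]
      exact ih
    · have haAT : a ∉ A ∪ T := by simp [ha, haT]
      have key := hZsub T (A ∪ T) a Finset.subset_union_right haAT
      have hnotin : a ∉ A \ T := by simp [ha]
      rw [Finset.insert_union, Finset.insert_sdiff_of_notMem _ haT,
        Finset.sum_insert hnotin]
      linarith

/-- **Theorem 2.** The greedy algorithm (Algorithm 2) for online resource
allocation with locking is 2-competitive: its output `G N` satisfies
`Z (G N) ≥ (1/2) · Z S` for every feasible allocation `S`. -/
theorem greedy_two_competitive_locking
    {ρ β : Type*} [DecidableEq ρ] [DecidableEq β]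
    (R : Finset ρ) (Bins : Finset β)
    (Tr : ρ → ℕ∞) (Tb : β → ℕ∞)
    -- the discard bin
    (bd : β) (hbd : bd ∈ Bins) (hbdT : Tb bd = ⊤)
    (Z : Finset (ρ × β) → ℝ)
    (hZ0 : Z ∅ = 0)
    (hZmono : ∀ S T : Finset (ρ × β), S ⊆ T → Z S ≤ Z T)
    (hZsub : ∀ (S T : Finset (ρ × β)) (x : ρ × β), S ⊆ T → x ∉ T →
      Z (insert x T) - Z T ≤ Z (insert x S) - Z S)
    (hZdiscard : ∀ (S : Finset (ρ × β)) (r : ρ), Z (insert (r, bd) S) = Z S)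
    -- the resources `r_1, …, r_N`, processed in nondecreasing order of arrival time
    (N : ℕ) (rs : Fin N → ρ)
    (hrs_inj : Function.Injective rs)
    (hrs_mem : ∀ i, rs i ∈ R)
    (hrs_surj : ∀ r ∈ R, ∃ i, rs i = r)
    (hrs_sorted : ∀ i j : Fin N, i ≤ j → Tr (rs i) ≤ Tr (rs j))
    -- the greedy choices `b_i` and the partial solutions `G i`
    (bs : Fin N → β)
    (G : ℕ → Finset (ρ × β))
    (hG0 : G 0 = ∅)
    (hGsucc : ∀ i : Fin N, G ((i : ℕ) + 1) = insert (rs i, bs i) (G (i : ℕ)))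
    (hbs_mem : ∀ i : Fin N, bs i ∈ Bins)
    (hbs_feas : ∀ i : Fin N, Tr (rs i) ≤ Tb (bs i))
    (hbs_max : ∀ i : Fin N, ∀ b ∈ Bins, Tr (rs i) ≤ Tb b →
      Z (insert (rs i, b) (G (i : ℕ))) - Z (G (i : ℕ))
        ≤ Z (insert (rs i, bs i) (G (i : ℕ))) - Z (G (i : ℕ))) :
    ∀ S : Finset (ρ × β), IsAllocation R Bins S → Feasible Tr Tb S →
      Z S ≤ 2 * Z (G N) := by
  intro S hS hSfeas
  -- G is a monotone chain up to N
  have hGmono : ∀ k, k ≤ N → ∀ j, j ≤ k → G j ⊆ G k := by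
    intro k
    induction k with
    | zero => intro _ j hj; interval_cases j; exact subset_rfl
    | succ k ih =>
      intro hkN j hj
      rcases Nat.lt_succ_iff_lt_or_eq.1 (Nat.lt_succ_of_le hj) with h | h
      · have hkN' : k < N := by omega
        have := hGsucc ⟨k, hkN'⟩
        simp only at this
        rw [this]
        exact (ih (by omega) j (by omega)).trans (Finset.subset_insert _ _)
      · rw [h]
  -- the difference set
  set A : Finset (ρ × β) := S \ G N with hA
  -- each element of A corresponds to some index
  have hidx : ∀ x : {x // x ∈ A}, ∃ i : Fin N, rs i = x.1.1 := by
    rintro ⟨x, hx⟩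
    have hxS : x ∈ S := (Finset.mem_sdiff.1 hx).1
    exact hrs_surj x.1 (Finset.mem_product.1 (hS.1 hxS)).1
  choose idx hidxspec using hidx
  -- per-element bound
  have hterm : ∀ x : {x // x ∈ A},
      Z (insert x.1 (G N)) - Z (G N) ≤ Z (G ((idx x : ℕ) + 1)) - Z (G (idx x : ℕ)) := by
    rintro x
    obtain ⟨⟨r, b⟩, hx⟩ := x
    have hxS : (r, b) ∈ S := (Finset.mem_sdiff.1 hx).1
    have hxG : (r, b) ∉ G N := (Finset.mem_sdiff.1 hx).2
    set i := idx ⟨(r, b), hx⟩ with hi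
    have hri : rs i = r := hidxspec ⟨(r, b), hx⟩
    have h1 : Z (insert (r, b) (G N)) - Z (G N) ≤
        Z (insert (r, b) (G (i : ℕ))) - Z (G (i : ℕ)) :=
      hZsub _ _ _ (hGmono N le_rfl (i : ℕ) (le_of_lt i.2)) hxG
    have hb : b ∈ Bins := (Finset.mem_product.1 (hS.1 hxS)).2
    have hfeas : Tr (rs i) ≤ Tb b := by rw [hri]; exact hSfeas (r, b) hxS
    have h2 := hbs_max i b hb hfeas
    rw [hGsucc i]
    refine h1.trans ?_
    rw [← hri]
    exact h2
  -- injectivity of idx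
  have hinj : ∀ x ∈ A.attach, ∀ y ∈ A.attach, idx x = idx y → x = y := by
    rintro x _ y _ hxy
    have h1 : x.1.1 = y.1.1 := by
      rw [← hidxspec x, ← hidxspec y, hxy]
    have hxS : x.1 ∈ S := (Finset.mem_sdiff.1 x.2).1
    have hyS : y.1 ∈ S := (Finset.mem_sdiff.1 y.2).1
    exact Subtype.ext (hS.2 _ hxS _ hyS h1)
  -- the telescoping sum
  have hd_nonneg : ∀ i : Fin N, 0 ≤ Z (G ((i : ℕ) + 1)) - Z (G (i : ℕ)) := by
    intro i
    have := hZmono (G (i : ℕ)) (G ((i : ℕ) + 1))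
      (by rw [hGsucc i]; exact Finset.subset_insert _ _)
    linarith
  have hsum : ∑ x ∈ A, (Z (insert x (G N)) - Z (G N)) ≤ Z (G N) := by
    calc ∑ x ∈ A, (Z (insert x (G N)) - Z (G N))
        = ∑ x ∈ A.attach, (Z (insert x.1 (G N)) - Z (G N)) := by
          exact (Finset.sum_attach _ _).symm
      _ ≤ ∑ x ∈ A.attach, (Z (G ((idx x : ℕ) + 1)) - Z (G (idx x : ℕ))) :=
          Finset.sum_le_sum fun x _ => hterm x
      _ = ∑ i ∈ A.attach.image idx, (Z (G ((i : ℕ) + 1)) - Z (G (i : ℕ))) :=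
          (Finset.sum_image (f := fun i : Fin N => Z (G ((i : ℕ) + 1)) - Z (G (i : ℕ))) hinj).symm
      _ ≤ ∑ i : Fin N, (Z (G ((i : ℕ) + 1)) - Z (G (i : ℕ))) :=
          Finset.sum_le_sum_of_subset_of_nonneg (Finset.subset_univ _)
            (fun i _ _ => hd_nonneg i)
      _ = ∑ i ∈ Finset.range N, (Z (G (i + 1)) - Z (G i)) :=
          Fin.sum_univ_eq_sum_range (fun n => Z (G (n + 1)) - Z (G n)) N
      _ = Z (G N) - Z (G 0) := Finset.sum_range_sub (fun n => Z (G n)) N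
      _ = Z (G N) := by rw [hG0, hZ0]; ring
  have hmb := marginal_sum_bound Z hZsub (G N) S
  have hZS : Z S ≤ Z (S ∪ G N) := hZmono _ _ Finset.subset_union_left
  have : Z (S ∪ G N) - Z (G N) ≤ Z (G N) := hmb.trans hsum
  linarith
end

section
/- (Lemma 3.) The output G = {(r_i, b_i) : i = 1,…,N} of the greedy algorithm (Algorithm 2) for Z is also a valid run of the greedy algorithm for Y over all bins: for every i, the bin b_i maximizes Y(G^{i−1} ∪ {(r_i, b)}) − Y(G^{i−1}) over all b ∈ B; moreover Y(G) = Z(G). -/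
open Finset

/-- **Lemma 3.** The output `G = {(r_i, b_i)}` of the greedy algorithm
(Algorithm 2) for `Z` is also a valid run of the greedy algorithm for `Y` over all bins:
each `b_i` maximizes the `Y`-increment over all `b ∈ Bins`; moreover `Y (G N) = Z (G N)`. -/
theorem greedy_for_Z_is_greedy_for_Y
    {ρ β : Type*} [DecidableEq ρ] [DecidableEq β]
    (R : Finset ρ) (Bins : Finset β)
    (Tr : ρ → ℕ∞) (Tb : β → ℕ∞)
    -- the discard bin
    (bd : β) (hbd : bd ∈ Bins) (hbdT : Tb bd = ⊤)
    (Z : Finset (ρ × β) → ℝ)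
    (hZ0 : Z ∅ = 0)
    (hZmono : ∀ S T : Finset (ρ × β), S ⊆ T → Z S ≤ Z T)
    (hZsub : ∀ (S T : Finset (ρ × β)) (x : ρ × β), S ⊆ T → x ∉ T →
      Z (insert x T) - Z T ≤ Z (insert x S) - Z S)
    (hZdiscard : ∀ (S : Finset (ρ × β)) (r : ρ), Z (insert (r, bd) S) = Z S)
    -- the valuation `Y` of the constructed standard submodular-maximization instance
    (Y : Finset (ρ × β) → ℝ)
    (hY0 : Y ∅ = 0)
    (hYinc : ∀ (S : Finset (ρ × β)) (r : ρ) (b : β), (r, b) ∉ S →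
      Y (insert (r, b) S) - Y S =
        if Tr r ≤ Tb b then Z (insert (r, b) S) - Z S else 0)
    -- the resources `r_1, …, r_N`, processed in nondecreasing order of arrival time
    (N : ℕ) (rs : Fin N → ρ)
    (hrs_inj : Function.Injective rs)
    (hrs_mem : ∀ i, rs i ∈ R)
    (hrs_surj : ∀ r ∈ R, ∃ i, rs i = r)
    (hrs_sorted : ∀ i j : Fin N, i ≤ j → Tr (rs i) ≤ Tr (rs j))
    -- the greedy choices `b_i` (for `Z`) and the partial solutions `G i`
    (bs : Fin N → β)
    (G : ℕ → Finset (ρ × β))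
    (hG0 : G 0 = ∅)
    (hGsucc : ∀ i : Fin N, G ((i : ℕ) + 1) = insert (rs i, bs i) (G (i : ℕ)))
    (hbs_mem : ∀ i : Fin N, bs i ∈ Bins)
    (hbs_feas : ∀ i : Fin N, Tr (rs i) ≤ Tb (bs i))
    (hbs_max : ∀ i : Fin N, ∀ b ∈ Bins, Tr (rs i) ≤ Tb b →
      Z (insert (rs i, b) (G (i : ℕ))) - Z (G (i : ℕ))
        ≤ Z (insert (rs i, bs i) (G (i : ℕ))) - Z (G (i : ℕ))) :
    (∀ i : Fin N, ∀ b ∈ Bins,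
      Y (insert (rs i, b) (G (i : ℕ))) - Y (G (i : ℕ))
        ≤ Y (insert (rs i, bs i) (G (i : ℕ))) - Y (G (i : ℕ))) ∧
    Y (G N) = Z (G N) := by

  -- elements of G n are earlier greedy pairs
  have hmem : ∀ n : ℕ, n ≤ N → ∀ e ∈ G n, ∃ j : Fin N, (j : ℕ) < n ∧ e = (rs j, bs j) := by
    intro n
    induction n with
    | zero => intro _ e he; rw [hG0] at he; exact absurd he (Finset.notMem_empty e)
    | succ m ih =>
      intro hm e he
      have hmN : m < N := hm
      have := hGsucc ⟨m, hmN⟩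
      simp only [Fin.val_mk] at this
      rw [this] at he
      rcases Finset.mem_insert.mp he with h | h
      · exact ⟨⟨m, hmN⟩, by simp, h⟩
      · obtain ⟨j, hj, hje⟩ := ih (le_of_lt hm) e h
        exact ⟨j, Nat.lt_succ_of_lt hj, hje⟩
  have hnotin : ∀ (i : Fin N) (b : β), (rs i, b) ∉ G (i : ℕ) := by
    intro i b hin
    obtain ⟨j, hj, hje⟩ := hmem (i : ℕ) (le_of_lt i.2) _ hin
    have : rs i = rs j := congrArg Prod.fst hje
    have : i = j := hrs_inj this
    omega
  -- Y-increment at step i for bin b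
  have hYi : ∀ (i : Fin N) (b : β),
      Y (insert (rs i, b) (G (i : ℕ))) - Y (G (i : ℕ)) =
        if Tr (rs i) ≤ Tb b then
          Z (insert (rs i, b) (G (i : ℕ))) - Z (G (i : ℕ)) else 0 := by
    intro i b; exact hYinc _ _ _ (hnotin i b)
  constructor
  · intro i b hb
    rw [hYi i b, hYi i (bs i), if_pos (hbs_feas i)]
    by_cases hfeas : Tr (rs i) ≤ Tb b
    · rw [if_pos hfeas]; exact hbs_max i b hb hfeas
    · rw [if_neg hfeas]
      have := hZmono (G (i : ℕ)) (insert (rs i, bs i) (G (i : ℕ)))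
        (Finset.subset_insert _ _)
      linarith
  · have key : ∀ n : ℕ, n ≤ N → Y (G n) = Z (G n) := by
      intro n
      induction n with
      | zero => intro _; rw [hG0, hY0, hZ0]
      | succ m ih =>
        intro hm
        have hmN : m < N := hm
        have hstep := hGsucc ⟨m, hmN⟩
        simp only [Fin.val_mk] at hstep
        rw [hstep]
        have h1 := hYi ⟨m, hmN⟩ (bs ⟨m, hmN⟩)
        rw [if_pos (hbs_feas ⟨m, hmN⟩)] at h1
        simp only [Fin.val_mk] at h1
        have := ih (le_of_lt hm)
        linarith
    exact key N le_rfl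
end

section
/- (Greedy is 2-competitive for standard online submodular maximization.) The greedy output satisfies Y(G^N) ≥ (1/2) · max{ Y(S) : S an allocation }, where the maximum is over all allocations S ⊆ R × B in which every resource occurs in at most one pair. -/
open Finset

/-- Marginal-gain bound: the gain of adding a whole set is at most the sum of
individual marginal gains. -/
lemma union_gain_le_sum_marg {γ : Type*} [DecidableEq γ]
    (Y : Finset γ → ℝ)
    (hYmono : ∀ S T : Finset γ, S ⊆ T → Y S ≤ Y T)
    (hYsub : ∀ (S T : Finset γ) (x : γ), S ⊆ T → x ∉ T →
      Y (insert x T) - Y T ≤ Y (insert x S) - Y S)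
    (A B : Finset γ) :
    Y (A ∪ B) - Y B ≤ ∑ x ∈ A, (Y (insert x B) - Y B) := by
  classical
  induction A using Finset.induction_on with
  | empty => simp
  | @insert x A hx ih =>
      rw [Finset.sum_insert hx]
      have h1 : Y (insert x A ∪ B) - Y (A ∪ B) ≤ Y (insert x B) - Y B := by
        by_cases hxAB : x ∈ A ∪ B
        · have : insert x A ∪ B = A ∪ B := by
            rw [Finset.insert_union, Finset.insert_eq_self.2 hxAB]
          rw [this]
          have := hYmono B (insert x B) (Finset.subset_insert _ _)
          linarith
        · have := hYsub B (A ∪ B) x Finset.subset_union_right hxAB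
          rw [Finset.insert_union]
          linarith
      linarith

/-- The online greedy algorithm is 2-competitive for standard online
submodular maximization: its output `G N` satisfies `Y (G N) ≥ (1/2) · Y S` for every
allocation `S ⊆ R × B` in which every resource occurs in at most one pair. -/
theorem greedy_two_competitive_standard
    {ρ β : Type*} [DecidableEq ρ] [DecidableEq β]
    (R : Finset ρ) (Bins : Finset β)
    (Y : Finset (ρ × β) → ℝ)
    (hY0 : Y ∅ = 0)
    (hYmono : ∀ S T : Finset (ρ × β), S ⊆ T → Y S ≤ Y T)
    (hYsub : ∀ (S T : Finset (ρ × β)) (x : ρ × β), S ⊆ T → x ∉ T →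
      Y (insert x T) - Y T ≤ Y (insert x S) - Y S)
    -- the resources `r_1, …, r_N` in their fixed processing order
    (N : ℕ) (rs : Fin N → ρ)
    (hrs_inj : Function.Injective rs)
    (hrs_mem : ∀ i, rs i ∈ R)
    (hrs_surj : ∀ r ∈ R, ∃ i, rs i = r)
    -- the greedy choices `b_i` and the partial solutions `G i`
    (bs : Fin N → β)
    (G : ℕ → Finset (ρ × β))
    (hG0 : G 0 = ∅)
    (hGsucc : ∀ i : Fin N, G ((i : ℕ) + 1) = insert (rs i, bs i) (G (i : ℕ)))
    (hbs_mem : ∀ i : Fin N, bs i ∈ Bins)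
    (hbs_max : ∀ i : Fin N, ∀ b ∈ Bins,
      Y (insert (rs i, b) (G (i : ℕ))) - Y (G (i : ℕ))
        ≤ Y (insert (rs i, bs i) (G (i : ℕ))) - Y (G (i : ℕ))) :
    ∀ S : Finset (ρ × β), IsAllocation R Bins S → Y S ≤ 2 * Y (G N) := by
  classical
  intro S hS
  obtain ⟨hSsub, hSuniq⟩ := hS
  -- g i is the greedy gain at step i
  set g : ℕ → ℝ := fun i => Y (G (i + 1)) - Y (G i) with hg
  have hstep : ∀ i : Fin N, G (i : ℕ) ⊆ G ((i : ℕ) + 1) := by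
    intro i
    rw [hGsucc i]
    exact Finset.subset_insert _ _
  -- G is monotone on [0, N]
  have hkeymono : ∀ k j : ℕ, j + k ≤ N → G j ⊆ G (j + k) := by
    intro k
    induction k with
    | zero => intro j _; simp
    | succ n ih =>
        intro j h
        have h1 : j + n ≤ N := by omega
        have h2 : j + n < N := by omega
        refine (ih j h1).trans ?_
        rw [Nat.add_succ]
        exact hstep ⟨j + n, h2⟩
  have hGmono : ∀ j : ℕ, j ≤ N → G j ⊆ G N := by
    intro j hj
    have heq : j + (N - j) = N := by omega
    have := hkeymono (N - j) j (by omega)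
    rwa [heq] at this
  -- nonnegativity of gains
  have hgnonneg : ∀ i ∈ Finset.range N, 0 ≤ g i := by
    intro i hi
    have hi' := Finset.mem_range.mp hi
    have := hYmono _ _ (hstep ⟨i, hi'⟩)
    simp only [hg]
    simpa using sub_nonneg.mpr this
  -- telescoping sum
  have hsum : ∑ i ∈ Finset.range N, g i = Y (G N) := by
    have := Finset.sum_range_sub (fun i => Y (G i)) N
    simpa [hg, hG0, hY0] using this
  -- index assignment: each e ∈ S corresponds to an index
  set φ : ρ × β → ℕ := fun e =>
    if h : ∃ i : Fin N, rs i = e.1 then (h.choose : ℕ) else 0 with hφ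
  have hφspec : ∀ e ∈ S, ∃ hlt : φ e < N, rs ⟨φ e, hlt⟩ = e.1 := by
    intro e he
    have he1 : e.1 ∈ R := (Finset.mem_product.mp (hSsub he)).1
    obtain ⟨i, hi⟩ := hrs_surj e.1 he1
    have hex : ∃ i : Fin N, rs i = e.1 := ⟨i, hi⟩
    simp only [hφ, dif_pos hex]
    exact ⟨hex.choose.isLt, by simpa using hex.choose_spec⟩
  -- marginal gain of e w.r.t. G N is at most g (φ e)
  have hmarg : ∀ e ∈ S, Y (insert e (G N)) - Y (G N) ≤ g (φ e) := by
    intro e he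
    obtain ⟨hlt, hrse⟩ := hφspec e he
    set i : Fin N := ⟨φ e, hlt⟩ with hi
    have he2 : e.2 ∈ Bins := (Finset.mem_product.mp (hSsub he)).2
    have hkey : Y (insert e (G (i : ℕ))) - Y (G (i : ℕ)) ≤ g (φ e) := by
      have heq : (rs i, e.2) = e := Prod.ext hrse rfl
      have h1 := hbs_max i e.2 he2
      rw [heq] at h1
      have h2 : g (φ e) = Y (insert (rs i, bs i) (G (i : ℕ))) - Y (G (i : ℕ)) := by
        show Y (G ((i : ℕ) + 1)) - Y (G (i : ℕ)) = _
        rw [hGsucc i]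
      linarith
    by_cases heG : e ∈ G N
    · rw [Finset.insert_eq_self.2 heG]
      have : (0 : ℝ) ≤ g (φ e) := hgnonneg _ (Finset.mem_range.mpr hlt)
      linarith
    · have hsub := hGmono (i : ℕ) (le_of_lt hlt)
      have := hYsub (G (i : ℕ)) (G N) e hsub heG
      linarith
  -- injectivity of φ on S
  have hφinj : Set.InjOn φ S := by
    intro e he e' he' hee
    obtain ⟨hlt, h1⟩ := hφspec e he
    obtain ⟨hlt', h2⟩ := hφspec e' he'
    have : e.1 = e'.1 := by
      rw [← h1, ← h2]
      congr 1
      exact Fin.ext hee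
    exact hSuniq e he e' he' this
  -- put it together
  have hA : Y S ≤ Y (G N) + ∑ e ∈ S, (Y (insert e (G N)) - Y (G N)) := by
    have h1 : Y S ≤ Y (S ∪ G N) := hYmono _ _ Finset.subset_union_left
    have h2 := union_gain_le_sum_marg Y hYmono hYsub S (G N)
    linarith
  have hB : ∑ e ∈ S, (Y (insert e (G N)) - Y (G N)) ≤ Y (G N) := by
    calc ∑ e ∈ S, (Y (insert e (G N)) - Y (G N))
        ≤ ∑ e ∈ S, g (φ e) := Finset.sum_le_sum hmarg
      _ = ∑ i ∈ S.image φ, g i := (Finset.sum_image (fun a ha b hb => hφinj ha hb)).symm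
      _ ≤ ∑ i ∈ Finset.range N, g i := by
          apply Finset.sum_le_sum_of_subset_of_nonneg
          · intro i hi
            obtain ⟨e, he, rfl⟩ := Finset.mem_image.mp hi
            exact Finset.mem_range.mpr (hφspec e he).1
          · intro i hi _; exact hgnonneg i hi
      _ = Y (G N) := hsum
  linarith
end
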